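/- arXiv:1309.1545 — 2 statements merged into one kernel-verified Lean document; each statement's English description precedes it below -/
import Mathlib

section
/- Let h ≥ p ≥ 1 and m ≥ 2 be integers. Then λ_{h,p,p}(T_{m,2}) ≥ h + (2m − 1)·p. -/
open SimpleGraph

/-- An `L(h,p,p)`-labelling of `G` with span `ℓ`: labels in `{0,…,ℓ}`, labels of vertices at
distance 1 differ by at least `h`, labels of vertices at distance 2 or 3 differ by at least `p`. -/
def IsLLabelling {V : Type} (G : SimpleGraph V) (h p ℓ : ℕ) (f : V → ℕ) : Prop :=
  (∀ v, f v ≤ ℓ) ∧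
  (∀ u v, G.dist u v = 1 → (h : ℤ) ≤ |(f u : ℤ) - (f v : ℤ)|) ∧
  (∀ u v, G.dist u v = 2 ∨ G.dist u v = 3 → (p : ℤ) ≤ |(f u : ℤ) - (f v : ℤ)|)

/-- `λ_{h,p,p}(G)`: the minimum span of an `L(h,p,p)`-labelling of `G`. -/
noncomputable def lambdaNum {V : Type} (G : SimpleGraph V) (h p : ℕ) : ℕ :=
  sInf {ℓ : ℕ | ∃ f : V → ℕ, IsLLabelling G h p ℓ f}

/-- A circular interval modulo `n`: a set of residues of the form `{a, a+1, …, a+s}` mod `n`. -/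
def IsCircInterval (n : ℕ) (I : Set (ZMod n)) : Prop :=
  ∃ (a : ZMod n) (s : ℕ), I = {x : ZMod n | ∃ i : ℕ, i ≤ s ∧ x = a + (i : ZMod n)}

/-- An elegant `L(h,p,p)`-labelling: additionally each vertex `u` has a circular interval `I u`
modulo `ℓ+1` containing the labels of all neighbours of `u`, with `I u ∩ I v = ∅` for edges `uv`. -/
def IsElegantLLabelling {V : Type} (G : SimpleGraph V) (h p ℓ : ℕ) (f : V → ℕ) : Prop :=
  IsLLabelling G h p ℓ f ∧
  ∃ I : V → Set (ZMod (ℓ + 1)),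
    (∀ u, IsCircInterval (ℓ + 1) (I u)) ∧
    (∀ u w, G.Adj u w → ((f w : ZMod (ℓ + 1)) ∈ I u)) ∧
    (∀ u v, G.Adj u v → I u ∩ I v = ∅)

/-- `λ*_{h,p,p}(G)`: the minimum span of an elegant `L(h,p,p)`-labelling of `G`. -/
noncomputable def lambdaStar {V : Type} (G : SimpleGraph V) (h p : ℕ) : ℕ :=
  sInf {ℓ : ℕ | ∃ f : V → ℕ, IsElegantLLabelling G h p ℓ f}

/-- The `ℓ`-cyclic distance between labels `a` and `b`. -/
def cycDist (ℓ a b : ℕ) : ℤ :=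
  min |(a : ℤ) - (b : ℤ)| ((ℓ : ℤ) - |(a : ℤ) - (b : ℤ)|)

/-- A `C(h,p,p)`-labelling of `G` with span `ℓ`: labels in `{0,…,ℓ-1}`, and the `ℓ`-cyclic distance
between labels of vertices at distance 1 (resp. 2 or 3) is at least `h` (resp. `p`). -/
def IsCLabelling {V : Type} (G : SimpleGraph V) (h p ℓ : ℕ) (f : V → ℕ) : Prop :=
  (∀ v, f v < ℓ) ∧
  (∀ u v, G.dist u v = 1 → (h : ℤ) ≤ cycDist ℓ (f u) (f v)) ∧
  (∀ u v, G.dist u v = 2 ∨ G.dist u v = 3 → (p : ℤ) ≤ cycDist ℓ (f u) (f v))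

/-- `σ_{h,p,p}(G)`: the minimum positive `ℓ` such that `G` has a `C(h,p,p)`-labelling of span `ℓ`. -/
noncomputable def sigmaNum {V : Type} (G : SimpleGraph V) (h p : ℕ) : ℕ :=
  sInf {ℓ : ℕ | 0 < ℓ ∧ ∃ f : V → ℕ, IsCLabelling G h p ℓ f}

/-- An elegant `C(h,p,p)`-labelling: additionally each vertex `u` has a circular interval `I u`
modulo `ℓ` containing the labels of all neighbours of `u`, with `I u ∩ I v = ∅` for edges `uv`. -/
def IsElegantCLabelling {V : Type} (G : SimpleGraph V) (h p ℓ : ℕ) (f : V → ℕ) : Prop :=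
  IsCLabelling G h p ℓ f ∧
  ∃ I : V → Set (ZMod ℓ),
    (∀ u, IsCircInterval ℓ (I u)) ∧
    (∀ u w, G.Adj u w → ((f w : ZMod ℓ) ∈ I u)) ∧
    (∀ u v, G.Adj u v → I u ∩ I v = ∅)

/-- `σ*_{h,p,p}(G)`: the minimum positive `ℓ` such that `G` has an elegant `C(h,p,p)`-labelling
of span `ℓ`. -/
noncomputable def sigmaStar {V : Type} (G : SimpleGraph V) (h p : ℕ) : ℕ :=
  sInf {ℓ : ℕ | 0 < ℓ ∧ ∃ f : V → ℕ, IsElegantCLabelling G h p ℓ f}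

/-- `Δ₂(G) = max over edges uv of (deg u + deg v)`. -/
noncomputable def deltaTwo {V : Type} (G : SimpleGraph V) [Fintype V] [DecidableRel G.Adj] : ℕ :=
  sSup {d : ℕ | ∃ u v : V, G.Adj u v ∧ d = G.degree u + G.degree v}

/-! In a tree, the vertices adjacent to an endpoint of an edge `ra` number `deg r + deg a` and are
pairwise at distance at most 3, so their labels are pairwise `p` apart. Choose `a` adjacent to `r`
with the least label above `f r` (after the reflection `f ↦ ℓ - f` if there is none). The label of
this set just below `f a` then belongs to a neighbour of `a`, so the labels split into two
`p`-separated chains on either side of a gap of length at least `h`. -/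

namespace Finset

lemma exists_predecessor_of_lt {α : Type*} [LinearOrder α] {A : Finset α} {a b : α} (hb : b ∈ A)
    (hba : b < a) : ∃ z ∈ A, b ≤ z ∧ z < a ∧ ∀ x ∈ A, z < x → a ≤ x := by
  obtain ⟨z, hz, hzmax⟩ := exists_max_image (A.filter (· < a)) id ⟨b, mem_filter.2 ⟨hb, hba⟩⟩
  obtain ⟨hzA, hza⟩ := mem_filter.1 hz
  exact ⟨z, hzA, hzmax b (mem_filter.2 ⟨hb, hba⟩), hza, fun x hx hzx =>
    not_lt.1 fun hxa => (hzmax x (mem_filter.2 ⟨hx, hxa⟩)).not_gt hzx⟩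

lemma card_sub_one_mul_le_of_separated {A : Finset ℤ} {p lo hi : ℤ} (hA : A.Nonempty)
    (hsep : ∀ x ∈ A, ∀ y ∈ A, x < y → x + p ≤ y) (hmem : ∀ x ∈ A, lo ≤ x ∧ x ≤ hi) :
    (#A - 1 : ℤ) * p ≤ hi - lo := by
  induction A using Finset.induction_on_max generalizing hi with
  | empty => exact absurd hA Finset.not_nonempty_empty
  | insert x s hlt ih =>
    rw [card_insert_of_notMem fun hx => (hlt x hx).false]
    have hx := hmem x (mem_insert_self x s)
    obtain rfl | hs := s.eq_empty_or_nonempty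
    · simpa using hx.1.trans hx.2
    have hys : s.max' hs ∈ s := s.max'_mem hs
    have hyx := hsep _ (mem_insert_of_mem hys) x (mem_insert_self x s) (hlt _ hys)
    have hs_le := ih (hi := s.max' hs) hs
      (fun u hu v hv => hsep u (mem_insert_of_mem hu) v (mem_insert_of_mem hv))
      (fun u hu => ⟨(hmem u (mem_insert_of_mem hu)).1, s.le_max' u hu⟩)
    push_cast
    linarith

lemma add_card_sub_two_mul_le_of_gap {A : Finset ℤ} {p h lo hi z a : ℤ}
    (hsep : ∀ x ∈ A, ∀ y ∈ A, x < y → x + p ≤ y) (hmem : ∀ x ∈ A, lo ≤ x ∧ x ≤ hi)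
    (hz : z ∈ A) (ha : a ∈ A) (hza : z < a) (hh : z + h ≤ a)
    (hgap : ∀ x ∈ A, z < x → a ≤ x) :
    h + (#A - 2 : ℤ) * p ≤ hi - lo := by
  have hsep' {B : Finset ℤ} (hB : B ⊆ A) : ∀ x ∈ B, ∀ y ∈ B, x < y → x + p ≤ y :=
    fun x hx y hy => hsep x (hB hx) y (hB hy)
  have hlow := card_sub_one_mul_le_of_separated (A := A.filter (· ≤ z)) (lo := lo) (hi := z)
    ⟨z, mem_filter.2 ⟨hz, le_rfl⟩⟩ (hsep' (filter_subset _ A))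
    (fun x hx => ⟨(hmem x (mem_filter.1 hx).1).1, (mem_filter.1 hx).2⟩)
  have hhigh := card_sub_one_mul_le_of_separated (A := A.filter fun x => ¬ x ≤ z) (lo := a)
    (hi := hi) ⟨a, mem_filter.2 ⟨ha, not_le.2 hza⟩⟩ (hsep' (filter_subset _ A))
    (fun x hx => ⟨hgap x (mem_filter.1 hx).1 (not_le.1 (mem_filter.1 hx).2),
      (hmem x (mem_filter.1 hx).1).2⟩)
  have hcard : (#(A.filter (· ≤ z)) + #(A.filter fun x => ¬ x ≤ z) : ℤ) = #A := by
    exact_mod_cast card_filter_add_card_filter_not (s := A) (· ≤ z)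
  rw [← hcard]
  linarith

lemma separated_image_of_le_abs_sub {ι : Type*} {S : Finset ι} {g : ι → ℤ} {p : ℤ}
    (hsep : ∀ u ∈ S, ∀ w ∈ S, u ≠ w → p ≤ |g u - g w|) :
    ∀ x ∈ S.image g, ∀ y ∈ S.image g, x < y → x + p ≤ y := by
  simp only [mem_image]
  rintro _ ⟨u, hu, rfl⟩ _ ⟨w, hw, rfl⟩ hlt
  have := hsep u hu w hw (fun huw => hlt.ne (congrArg g huw))
  rw [abs_sub_comm, abs_of_pos (sub_pos.2 hlt)] at this
  linarith

end Finset

open Finset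

namespace SimpleGraph

variable {V : Type} {G : SimpleGraph V}

lemma IsAcyclic.disjoint_neighborFinset_of_adj [G.LocallyFinite] (hG : G.IsAcyclic) {u v : V}
    (huv : G.Adj u v) : Disjoint (G.neighborFinset u) (G.neighborFinset v) := by
  classical
  refine Finset.disjoint_left.2 fun w hwu hwv => ?_
  rw [mem_neighborFinset] at hwu hwv
  exact hG.cliqueFree le_rfl {u, v, w} (is3Clique_triple_iff.2 ⟨huv, hwu, hwv⟩)

lemma IsAcyclic.card_neighborFinset_union_of_adj [G.LocallyFinite] [DecidableEq V]
    (hG : G.IsAcyclic) {u v : V} (huv : G.Adj u v) :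
    #(G.neighborFinset u ∪ G.neighborFinset v) = G.degree u + G.degree v := by
  rw [card_union_of_disjoint (hG.disjoint_neighborFinset_of_adj huv),
    card_neighborFinset_eq_degree, card_neighborFinset_eq_degree]

lemma Connected.dist_le_three_of_mem_neighborFinset_union [G.LocallyFinite] [DecidableEq V]
    (hG : G.Connected) {u v x y : V} (huv : G.Adj u v)
    (hx : x ∈ G.neighborFinset u ∪ G.neighborFinset v)
    (hy : y ∈ G.neighborFinset u ∪ G.neighborFinset v) : G.dist x y ≤ 3 := by
  simp only [mem_union, mem_neighborFinset] at hx hy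
  obtain ⟨s, hs, hxs⟩ : ∃ s, (s = u ∨ s = v) ∧ G.Adj x s := by
    rcases hx with hx | hx
    exacts [⟨u, .inl rfl, hx.symm⟩, ⟨v, .inr rfl, hx.symm⟩]
  obtain ⟨t, ht, hty⟩ : ∃ t, (t = u ∨ t = v) ∧ G.Adj t y := by
    rcases hy with hy | hy
    exacts [⟨u, .inl rfl, hy⟩, ⟨v, .inr rfl, hy⟩]
  have hst : G.dist s t ≤ 1 := by
    rcases hs with rfl | rfl <;> rcases ht with rfl | rfl <;>
      simp [dist_eq_one_iff_adj.2 huv, dist_eq_one_iff_adj.2 huv.symm]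
  calc G.dist x y ≤ G.dist x s + (G.dist s t + G.dist t y) :=
        hG.dist_triangle.trans (Nat.add_le_add_left hG.dist_triangle _)
    _ ≤ 3 := by rw [dist_eq_one_iff_adj.2 hxs, dist_eq_one_iff_adj.2 hty]; omega

end SimpleGraph

lemma exists_isLLabelling {V : Type} [Fintype V] (G : SimpleGraph V) {h p : ℕ} (hph : p ≤ h) :
    ∃ ℓ f, IsLLabelling G h p ℓ f := by
  let e := Fintype.equivFin V
  have hsep {u v : V} (huv : u ≠ v) : (h : ℤ) ≤ |((h * e u : ℕ) : ℤ) - (h * e v : ℕ)| := by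
    have hne : ((e u : ℕ) : ℤ) ≠ e v := by
      exact_mod_cast fun he => huv (e.injective (Fin.ext he))
    push_cast
    rw [← mul_sub, abs_mul, abs_of_nonneg (Int.natCast_nonneg h)]
    exact le_mul_of_one_le_right (Int.natCast_nonneg h) (Int.one_le_abs (sub_ne_zero.2 hne))
  refine ⟨h * Fintype.card V, fun v => h * e v, fun v => Nat.mul_le_mul_left h (e v).isLt.le,
    fun u v huv => hsep ?_, fun u v huv => (Int.ofNat_le.2 hph).trans (hsep ?_)⟩ <;>
  · rintro rfl
    simp at huv

namespace IsLLabelling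

variable {V : Type} {G : SimpleGraph V} {h p ℓ : ℕ} {f : V → ℕ}

lemma reflect (hf : IsLLabelling G h p ℓ f) : IsLLabelling G h p ℓ (fun v => ℓ - f v) := by
  have habs (u v : V) : |((ℓ - f u : ℕ) : ℤ) - (ℓ - f v : ℕ)| = |(f u : ℤ) - f v| := by
    rw [Nat.cast_sub (hf.1 u), Nat.cast_sub (hf.1 v), ← abs_neg]
    ring_nf
  refine ⟨fun v => Nat.sub_le _ _, fun u v huv => ?_, fun u v huv => ?_⟩ <;> rw [habs]
  exacts [hf.2.1 u v huv, hf.2.2 u v huv]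

lemma le_abs_sub_of_dist_le_three (hf : IsLLabelling G h p ℓ f) (hG : G.Connected)
    (hph : p ≤ h) {u v : V} (huv : u ≠ v) (hd : G.dist u v ≤ 3) :
    (p : ℤ) ≤ |(f u : ℤ) - f v| := by
  have := hG.pos_dist_of_ne huv
  obtain h1 | h23 : G.dist u v = 1 ∨ G.dist u v = 2 ∨ G.dist u v = 3 := by omega
  exacts [(Int.ofNat_le.2 hph).trans (hf.2.1 u v h1), hf.2.2 u v h23]

variable [G.LocallyFinite]

lemma add_mul_le_of_adj_of_minimal (hf : IsLLabelling G h p ℓ f) (hT : G.IsTree) (hp : 0 < p)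
    (hph : p ≤ h) {r a : V} (hra : G.Adj r a) (hlt : f r < f a)
    (hmin : ∀ x, G.Adj r x → f r < f x → f a ≤ f x) :
    h + (G.degree r + G.degree a - 2 : ℤ) * p ≤ ℓ := by
  classical
  set S := G.neighborFinset r ∪ G.neighborFinset a
  have hrS : r ∈ S := mem_union_right _ ((G.mem_neighborFinset a r).2 hra.symm)
  have haS : a ∈ S := mem_union_left _ ((G.mem_neighborFinset r a).2 hra)
  have hsepS : ∀ u ∈ S, ∀ w ∈ S, u ≠ w → (p : ℤ) ≤ |(f u : ℤ) - f w| := fun u hu w hw huw =>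
    hf.le_abs_sub_of_dist_le_three hT.connected hph huw
      (hT.connected.dist_le_three_of_mem_neighborFinset_union hra hu hw)
  set A := S.image fun v => (f v : ℤ)
  have hcardA : #A = G.degree r + G.degree a := by
    rw [card_image_of_injOn, hT.isAcyclic.card_neighborFinset_union_of_adj hra]
    intro u hu w hw he
    by_contra huw
    have := hsepS u hu w hw huw
    simp only [he, sub_self, abs_zero] at this
    omega
  have hmem : ∀ x ∈ A, (0 : ℤ) ≤ x ∧ x ≤ ℓ := by
    simp only [A, mem_image]
    rintro _ ⟨v, -, rfl⟩
    exact ⟨Int.natCast_nonneg _, Int.ofNat_le.2 (hf.1 v)⟩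
  obtain ⟨_, hzA, hrz, hza, hgap⟩ :=
    exists_predecessor_of_lt (A := A) (mem_image_of_mem _ hrS) (Int.ofNat_lt.2 hlt)
  obtain ⟨u, huS, rfl⟩ := mem_image.1 hzA
  -- by minimality of `a`, the label just below `f a` is not carried by a neighbour of `r`
  have hau : G.Adj a u := by
    refine (G.mem_neighborFinset a u).1 ((mem_union.1 huS).resolve_left fun hur => ?_)
    have hru := (G.mem_neighborFinset r u).1 hur
    have := hsepS u huS r hrS hru.ne.symm
    have := hmin u hru (by rw [abs_of_nonneg (by omega)] at this; omega)
    omega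
  have hh : (h : ℤ) ≤ |(f a : ℤ) - f u| := hf.2.1 a u (dist_eq_one_iff_adj.2 hau)
  rw [abs_of_pos (by omega)] at hh
  have := add_card_sub_two_mul_le_of_gap (h := h) (separated_image_of_le_abs_sub hsepS) hmem
    hzA (mem_image_of_mem _ haS) hza (by omega) hgap
  rw [hcardA] at this
  push_cast at this
  linarith

lemma add_mul_le (hf : IsLLabelling G h p ℓ f) (hT : G.IsTree) (hp : 0 < p) (hph : p ≤ h)
    {r : V} {d : ℕ} (hr : (G.neighborFinset r).Nonempty)
    (hdeg : ∀ a, G.Adj r a → G.degree a = d) :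
    h + (G.degree r + d - 2 : ℤ) * p ≤ ℓ := by
  classical
  by_cases hup : ∃ x, G.Adj r x ∧ f r < f x
  · obtain ⟨x, hrx, hx⟩ := hup
    obtain ⟨a, ha, hmin⟩ := exists_min_image ((G.neighborFinset r).filter (f r < f ·)) f
      ⟨x, mem_filter.2 ⟨(G.mem_neighborFinset r x).2 hrx, hx⟩⟩
    obtain ⟨hra, hlt⟩ := mem_filter.1 ha
    rw [mem_neighborFinset] at hra
    rw [← hdeg a hra]
    exact hf.add_mul_le_of_adj_of_minimal hT hp hph hra hlt
      fun y hry hy => hmin y (mem_filter.2 ⟨(G.mem_neighborFinset r y).2 hry, hy⟩)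
  · push Not at hup
    obtain ⟨a, ha, hmax⟩ := exists_max_image (G.neighborFinset r) f hr
    rw [mem_neighborFinset] at ha
    have hne : f a ≠ f r := fun he => by
      have := hf.2.1 r a (dist_eq_one_iff_adj.2 ha)
      rw [he, sub_self, abs_zero] at this
      omega
    have := hf.1 r
    rw [← hdeg a ha]
    exact hf.reflect.add_mul_le_of_adj_of_minimal hT hp hph ha
      (by have := hup a ha; omega)
      fun y hry _ => by have := hmax y ((G.mem_neighborFinset r y).2 hry); omega

end IsLLabelling

theorem stmt2_general {V : Type} [Fintype V] (G : SimpleGraph V) [DecidableRel G.Adj]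
    (hT : G.IsTree) (m : ℕ) (hm : 2 ≤ m) (r : V)
    (hr : G.degree r = m)
    (hnbr : ∀ v : V, G.Adj r v → G.degree v = m + 1)
    (h p : ℕ) (hp : 1 ≤ p) (hph : p ≤ h) :
    h + (2 * m - 1) * p ≤ lambdaNum G h p := by
  have hrne : (G.neighborFinset r).Nonempty := by
    rw [← card_pos, card_neighborFinset_eq_degree, hr]
    omega
  obtain ⟨ℓ₀, f₀, hf₀⟩ := exists_isLLabelling G hph
  refine le_csInf ⟨ℓ₀, f₀, hf₀⟩ fun ℓ ⟨f, hf⟩ => ?_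
  have := hf.add_mul_le hT hp hph hrne hnbr
  rw [hr] at this
  push_cast at this
  zify [show 1 ≤ 2 * m by omega]
  linarith

theorem stmt2 {V : Type} [Fintype V] (G : SimpleGraph V) [DecidableRel G.Adj]
    (hT : G.IsTree) (m : ℕ) (hm : 2 ≤ m) (r : V)
    (hr : G.degree r = m)
    (hnbr : ∀ v : V, G.Adj r v → G.degree v = m + 1)
    (hball : ∀ v : V, G.dist r v ≤ 2)
    (h p : ℕ) (hp : 1 ≤ p) (hph : p ≤ h) :
    h + (2 * m - 1) * p ≤ lambdaNum G h p :=
  stmt2_general G hT m hm r hr hnbr h p hp hph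
end

section
/- Let h ≥ p ≥ 1 be integers and let T be a finite tree with diameter at least 3 and maximum degree Δ. If T contains T_{Δ−1,2} as a subtree (equivalently, some vertex of T has at least Δ−1 neighbours each of degree Δ), then h + (2Δ − 3)·p ≤ λ_{h,p,p}(T) ≤ λ*_{h,p,p}(T) ≤ h + 2(Δ − 1)·p. -/
open SimpleGraph

/-!
Lower bound: take a vertex `r` with `Δ - 1` neighbours of degree `Δ`, and among them the neighbour
`s` whose label is closest to `f r`. The vertex `r`, these neighbours and the `Δ - 1` further
neighbours of `s` are pairwise at distance at most 3, so their `2Δ - 1` labels are `p`-separated.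
Besides, no label falls in the window of length `h` next to `f s` on the side of `f r`: labels of
neighbours of `s` are `h`-far from `f s`, and the labels of the other heavy neighbours of `r` are
no closer to `f r` than `f s` is. Closing that window costs `h - p`, whence
`h + (2Δ - 3) p ≤ ℓ`.

Upper bound: root the tree and colour its distance-two graph greedily by depth with `Δ` colours (a
vertex only has to avoid its siblings and its grandparent). Label `v` by `c v * p` at even depth
and by `h + (Δ - 1) p + c v * p` at odd depth. Vertices at distance 1 or 3 have depths of
different parity and hence labels at least `h` apart; each vertex sees all its neighbours' labels
in one of the two blocks, which are disjoint circular intervals.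
-/

open Finset

theorem Int.natCast_le_abs_sub_iff {a b k : ℕ} :
    (k : ℤ) ≤ |(a : ℤ) - b| ↔ a + k ≤ b ∨ b + k ≤ a := by
  rw [le_abs']
  omega

namespace Finset

variable {α : Type*} {s : Finset α} {g : α → ℕ} {p ℓ : ℕ}

theorem card_sub_one_mul_le_of_separated_s3 (hp : 0 < p)
    (hsep : ∀ x ∈ s, ∀ y ∈ s, x ≠ y → g x + p ≤ g y ∨ g y + p ≤ g x) (hle : ∀ x ∈ s, g x ≤ ℓ) :
    (#s - 1) * p ≤ ℓ := by
  have hcard : #s ≤ #(range (ℓ / p + 1)) := by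
    refine card_le_card_of_injOn (fun x => g x / p)
      (fun x hx => mem_range.mpr (Nat.lt_succ_of_le (Nat.div_le_div_right (hle x hx)))) ?_
    intro x hx y hy hxy
    by_contra hne
    have hdiv : ∀ a b, a + p ≤ b → a / p < b / p := fun a b hab =>
      (Nat.add_div_right a hp).symm.trans_le (Nat.div_le_div_right hab)
    rcases hsep x hx y hy hne with hxy' | hxy'
    · exact (hdiv _ _ hxy').ne hxy
    · exact (hdiv _ _ hxy').ne hxy.symm
  rw [card_range] at hcard
  calc (#s - 1) * p ≤ ℓ / p * p := Nat.mul_le_mul_right p (Nat.sub_le_of_le_add hcard)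
    _ ≤ ℓ := Nat.div_mul_le_self ℓ p

theorem add_card_sub_two_mul_le_of_separated {h c : ℕ} (hp : 0 < p) (hph : p ≤ h)
    (hsep : ∀ x ∈ s, ∀ y ∈ s, x ≠ y → g x + p ≤ g y ∨ g y + p ≤ g x) (hle : ∀ x ∈ s, g x ≤ ℓ)
    (hgap : ∀ x ∈ s, g x ≤ c ∨ c + h ≤ g x) (hc : c + h ≤ ℓ) :
    h + (#s - 2) * p ≤ ℓ := by
  -- closing the gap `(c, c + h)` down to length `p` keeps the labels `p`-separated
  let close : ℕ → ℕ := fun a => if a ≤ c then a else a - (h - p)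
  have hclosed : (#s - 1) * p ≤ ℓ - (h - p) := by
    refine card_sub_one_mul_le_of_separated_s3 (g := close ∘ g) hp (fun x hx y hy hxy => ?_)
      (fun x hx => ?_)
    · have := hsep x hx y hy hxy
      have := hgap x hx
      have := hgap y hy
      simp only [close, Function.comp_apply]
      split_ifs <;> omega
    · have := hle x hx
      simp only [close, Function.comp_apply]
      split_ifs <;> omega
  rcases Nat.lt_or_ge #s 2 with hs | hs
  · rw [Nat.sub_eq_zero_of_le hs.le, zero_mul]
    omega
  · have : (#s - 1) * p = (#s - 2) * p + p := by
      rw [← Nat.succ_mul]; congr 1; omega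
    omega

end Finset

def circInterval (n a s : ℕ) : Set (ZMod n) :=
  {x | ∃ i : ℕ, i ≤ s ∧ x = (a : ZMod n) + (i : ZMod n)}

theorem isCircInterval_circInterval (n a s : ℕ) : IsCircInterval n (circInterval n a s) :=
  ⟨a, s, rfl⟩

theorem natCast_mem_circInterval {n a s m : ℕ} (ham : a ≤ m) (hms : m ≤ a + s) :
    (m : ZMod n) ∈ circInterval n a s :=
  ⟨m - a, by omega, by rw [← Nat.cast_add, Nat.add_sub_cancel' ham]⟩

theorem circInterval_inter_circInterval {n a s b t : ℕ} (hab : a + s < b) (hbn : b + t < n) :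
    circInterval n a s ∩ circInterval n b t = ∅ := by
  ext x
  simp only [circInterval, Set.mem_inter_iff, Set.mem_ofPred_eq, Set.mem_empty_iff_false,
    iff_false, not_and]
  rintro ⟨i, hi, rfl⟩ ⟨j, hj, hij⟩
  rw [← Nat.cast_add, ← Nat.cast_add] at hij
  have := congrArg ZMod.val hij
  rw [ZMod.val_cast_of_lt (by omega), ZMod.val_cast_of_lt (by omega)] at this
  omega

section Spans

variable {V : Type} {G : SimpleGraph V} {h p ℓ : ℕ} {f : V → ℕ}

theorem lambdaNum_le (hf : IsLLabelling G h p ℓ f) : lambdaNum G h p ≤ ℓ :=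
  Nat.sInf_le ⟨f, hf⟩

theorem lambdaStar_le (hf : IsElegantLLabelling G h p ℓ f) : lambdaStar G h p ≤ ℓ :=
  Nat.sInf_le ⟨f, hf⟩

theorem exists_isLLabelling_lambdaNum (hf : IsLLabelling G h p ℓ f) :
    ∃ g, IsLLabelling G h p (lambdaNum G h p) g :=
  Nat.sInf_mem (s := {ℓ | ∃ f, IsLLabelling G h p ℓ f}) ⟨ℓ, f, hf⟩

theorem exists_isElegantLLabelling_lambdaStar (hf : IsElegantLLabelling G h p ℓ f) :
    ∃ g, IsElegantLLabelling G h p (lambdaStar G h p) g :=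
  Nat.sInf_mem (s := {ℓ | ∃ f, IsElegantLLabelling G h p ℓ f}) ⟨ℓ, f, hf⟩

theorem lambdaNum_le_lambdaStar (hf : IsElegantLLabelling G h p ℓ f) :
    lambdaNum G h p ≤ lambdaStar G h p :=
  let ⟨_, hg⟩ := exists_isElegantLLabelling_lambdaStar hf
  lambdaNum_le hg.1

end Spans

section DoubleStar

variable {V : Type} {G : SimpleGraph V} {h p ℓ : ℕ} {f : V → ℕ}

theorem IsLLabelling.add_le_or_add_le (hf : IsLLabelling G h p ℓ f)
    (hG : G.Connected) (hph : p ≤ h) {x y : V} (hxy : x ≠ y) (hd : G.dist x y ≤ 3) :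
    f x + p ≤ f y ∨ f y + p ≤ f x := by
  rw [← Int.natCast_le_abs_sub_iff]
  have := hG.pos_dist_of_ne hxy
  rcases (by omega : G.dist x y = 1 ∨ G.dist x y = 2 ∨ G.dist x y = 3) with h1 | h2 | h3
  · exact (Nat.cast_le.mpr hph).trans (hf.2.1 x y h1)
  · exact hf.2.2 x y (Or.inl h2)
  · exact hf.2.2 x y (Or.inr h3)

theorem IsLLabelling.add_card_sub_two_mul_le (hf : IsLLabelling G h p ℓ f)
    (hG : G.Connected) (hp : 0 < p) (hph : p ≤ h) {r s : V} (hrs : G.Adj r s) {W : Finset V}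
    (hW : ∀ x ∈ W, x = r ∨ G.Adj s x ∨
      (G.Adj r x ∧ |(f s : ℤ) - f r| ≤ |(f x : ℤ) - f r|)) :
    h + (#W - 2) * p ≤ ℓ := by
  have hnear : ∀ x ∈ W, G.dist x r ≤ 1 ∨ G.dist x s ≤ 1 := fun x hx => by
    rcases hW x hx with rfl | hx | hx
    · simp
    · exact Or.inr (dist_eq_one_iff_adj.mpr hx.symm).le
    · exact Or.inl (dist_eq_one_iff_adj.mpr hx.1.symm).le
  have hsep : ∀ x ∈ W, ∀ y ∈ W, x ≠ y → f x + p ≤ f y ∨ f y + p ≤ f x := by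
    intro x hx y hy hxy
    refine hf.add_le_or_add_le hG hph hxy ?_
    have hrs1 : G.dist r s = 1 := dist_eq_one_iff_adj.mpr hrs
    have := hG.dist_triangle (u := x) (v := r) (w := y)
    have := hG.dist_triangle (u := x) (v := s) (w := y)
    have := hG.dist_triangle (u := r) (v := s) (w := y)
    have := hG.dist_triangle (u := s) (v := r) (w := y)
    rw [dist_comm (u := s) (v := r)] at *
    rw [dist_comm (u := r) (v := y), dist_comm (u := s) (v := y)] at *
    rcases hnear x hx with h1 | h1 <;> rcases hnear y hy with h2 | h2 <;> omega
  have hrs : f r + h ≤ f s ∨ f s + h ≤ f r :=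
    Int.natCast_le_abs_sub_iff.mp (hf.2.1 r s (dist_eq_one_iff_adj.mpr hrs))
  -- the gap of length `h` lies next to `f s`, on the side facing `f r`
  have hr := hf.1 r
  have hs := hf.1 s
  refine add_card_sub_two_mul_le_of_separated (c := if f r < f s then f s - h else f s) hp hph
    hsep (fun x _ => hf.1 x) (fun x hx => ?_) (by split_ifs <;> omega)
  rcases hW x hx with rfl | hx | ⟨-, hx⟩
  · split_ifs <;> omega
  · have := Int.natCast_le_abs_sub_iff.mp (hf.2.1 s x (dist_eq_one_iff_adj.mpr hx))
    split_ifs <;> omega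
  · rcases abs_cases ((f s : ℤ) - f r) with ⟨h1, h1'⟩ | ⟨h1, h1'⟩ <;>
      rcases abs_cases ((f x : ℤ) - f r) with ⟨h2, h2'⟩ | ⟨h2, h2'⟩ <;>
      rw [h1, h2] at hx <;> split_ifs <;> omega

end DoubleStar

namespace SimpleGraph

section Colouring

variable {V : Type*}

def distTwoGraph (G : SimpleGraph V) : SimpleGraph V where
  Adj u v := G.dist u v = 2
  symm := ⟨fun u v huv => by rwa [dist_comm]⟩
  loopless := ⟨fun u hu => by simp at hu⟩

variable {G : SimpleGraph V}

@[simp]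
theorem distTwoGraph_adj {u v : V} : G.distTwoGraph.Adj u v ↔ G.dist u v = 2 := Iff.rfl

theorem colorable_of_forall_card_le_lt [Fintype V] (H : SimpleGraph V) [DecidableRel H.Adj]
    (d : V → ℕ) {k : ℕ} (hk : ∀ v, #{u | H.Adj u v ∧ d u ≤ d v} < k) : H.Colorable k := by
  classical
  suffices ∀ s : Finset V, ∃ c : V → ℕ, (∀ v ∈ s, c v < k) ∧
      ∀ u ∈ s, ∀ v ∈ s, H.Adj u v → c u ≠ c v by
    obtain ⟨c, hck, hc⟩ := this univ
    exact ⟨Coloring.mk (fun v => ⟨c v, hck v (mem_univ v)⟩) fun huv heq =>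
      hc _ (mem_univ _) _ (mem_univ _) huv (Fin.val_eq_of_eq heq)⟩
  intro s
  induction s using Finset.induction_on_max_value d with
  | empty => exact ⟨0, by simp, by simp⟩
  | insert a s ha hmax ih =>
    obtain ⟨c, hck, hc⟩ := ih
    -- `d` is maximal at `a`, so the coloured neighbours of `a` are among those counted by `hk a`
    have hused : #((s.filter (H.Adj · a)).image c) < #(range k) := by
      rw [card_range]
      refine card_image_le.trans_lt ((card_le_card fun u hu => ?_).trans_lt (hk a))
      simp only [mem_filter, mem_univ, true_and] at hu ⊢
      exact ⟨hu.2, hmax u hu.1⟩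
    obtain ⟨b, hbk, hb⟩ := exists_mem_notMem_of_card_lt_card hused
    have hfresh : ∀ v ∈ s, H.Adj v a → c v ≠ b := fun v hv hva hvb =>
      hb (mem_image.mpr ⟨v, mem_filter.mpr ⟨hv, hva⟩, hvb⟩)
    have hne : ∀ v ∈ s, v ≠ a := fun v hv hva => ha (hva ▸ hv)
    refine ⟨Function.update c a b, fun v hv => ?_, fun u hu v hv huv => ?_⟩
    · rcases mem_insert.mp hv with rfl | hv
      · simpa using mem_range.mp hbk
      · simpa [hne v hv] using hck v hv
    · rcases mem_insert.mp hu with rfl | hu' <;> rcases mem_insert.mp hv with rfl | hv'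
      · exact (H.irrefl huv).elim
      · simpa [hne v hv'] using (hfresh v hv' huv.symm).symm
      · simpa [hne u hu'] using hfresh u hu' huv
      · simpa [hne u hu', hne v hv'] using hc u hu' v hv' huv

theorem exists_adj_adj_of_dist_eq_two {u v : V} (h : G.dist u v = 2) :
    ∃ m, G.Adj u m ∧ G.Adj m v := by
  obtain ⟨w, hw⟩ := exists_walk_of_dist_ne_zero (G := G) (by omega : G.dist u v ≠ 0)
  rcases w with _ | ⟨h₁, _ | ⟨h₂, _ | ⟨h₃, q⟩⟩⟩
  all_goals simp only [Walk.length_nil, Walk.length_cons] at hw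
  · omega
  · omega
  · exact ⟨_, h₁, h₂⟩
  · omega

theorem two_le_maxDegree_of_three_le_dist [Fintype V] [DecidableRel G.Adj] {u v : V}
    (h : 3 ≤ G.dist u v) : 2 ≤ G.maxDegree := by
  classical
  obtain ⟨w, hw⟩ := exists_walk_of_dist_ne_zero (G := G) (by omega : G.dist u v ≠ 0)
  rcases w with _ | ⟨h₁, _ | ⟨h₂, q⟩⟩
  · simp only [Walk.length_nil] at hw; omega
  · simp only [Walk.length_cons, Walk.length_nil] at hw; omega
  · rename_i a b
    have hub : u ≠ b := by
      rintro rfl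
      have := dist_le q
      simp only [Walk.length_cons] at hw
      omega
    have hsub : ({u, b} : Finset V) ⊆ G.neighborFinset a := by
      simp [insert_subset_iff, h₁.symm, h₂]
    calc 2 = #({u, b} : Finset V) := (card_pair hub).symm
      _ ≤ G.degree a := card_neighborFinset_eq_degree G a ▸ card_le_card hsub
      _ ≤ G.maxDegree := G.degree_le_maxDegree a

theorem Connected.exists_adj_dist_add_one_eq (hG : G.Connected) (r : V) {v : V} (hv : v ≠ r) :
    ∃ m, G.Adj m v ∧ G.dist r m + 1 = G.dist r v := by
  obtain ⟨w, hw⟩ := hG.exists_walk_length_eq_dist v r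
  cases w with
  | nil => exact absurd rfl hv
  | @cons _ m _ hadj q =>
    refine ⟨m, hadj.symm, ?_⟩
    have hq : G.dist r m ≤ q.length := dist_comm (G := G) ▸ dist_le q
    have htri : G.dist r v ≤ G.dist r m + G.dist m v := hG.dist_triangle
    rw [Walk.length_cons, dist_comm] at hw
    rw [dist_eq_one_iff_adj.mpr hadj.symm] at htri
    omega

namespace IsTree

theorem eq_of_adj_of_dist_add_one_eq (hT : G.IsTree) (r : V) {m w₁ w₂ : V} (h₁ : G.Adj w₁ m)
    (h₂ : G.Adj w₂ m) (hd₁ : G.dist r w₁ + 1 = G.dist r m) (hd₂ : G.dist r w₂ + 1 = G.dist r m) :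
    w₁ = w₂ := by
  obtain ⟨q₁, hq₁⟩ := hT.connected.exists_walk_length_eq_dist r w₁
  obtain ⟨q₂, hq₂⟩ := hT.connected.exists_walk_length_eq_dist r w₂
  have hp₁ := (q₁.concat h₁).isPath_of_length_eq_dist (by simp [hq₁, hd₁])
  have hp₂ := (q₂.concat h₂).isPath_of_length_eq_dist (by simp [hq₂, hd₂])
  exact (Walk.concat_inj ((hT.existsUnique_path r m).unique hp₁ hp₂)).1

theorem even_dist_add_dist_add_dist (hT : G.IsTree) (r u v : V) :
    Even (G.dist u v + G.dist r u + G.dist r v) := by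
  obtain ⟨w, hw⟩ := hT.connected.exists_walk_length_eq_dist u v
  rw [← hw]
  clear hw
  induction w with
  | nil => simp
  | cons hadj q ih =>
    rw [Walk.length_cons, Nat.even_iff]
    rw [Nat.even_iff] at ih
    rcases hT.dist_eq_dist_add_one_of_adj r hadj with hd | hd <;> omega

theorem colorable_distTwoGraph [Fintype V] [DecidableRel G.Adj] (hT : G.IsTree)
    (hΔ : 1 ≤ G.maxDegree) : G.distTwoGraph.Colorable G.maxDegree := by
  classical
  obtain ⟨r⟩ := hT.connected.nonempty
  refine colorable_of_forall_card_le_lt _ (G.dist r) fun v => ?_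
  by_cases hv : v = r
  · subst hv
    suffices #{u | G.distTwoGraph.Adj u v ∧ G.dist v u ≤ G.dist v v} = 0 by omega
    refine card_eq_zero.mpr (filter_eq_empty_iff.mpr fun u _ ⟨huv, hle⟩ => ?_)
    rw [dist_self, Nat.le_zero, hT.connected.dist_eq_zero_iff] at hle
    subst hle
    simp at huv
  obtain ⟨m, hmv, hm⟩ := hT.connected.exists_adj_dist_add_one_eq r hv
  have hsub : ({u | G.distTwoGraph.Adj u v ∧ G.dist r u ≤ G.dist r v} : Finset V) ⊆
      (G.neighborFinset m).erase v := by
    intro u hu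
    simp only [mem_filter, mem_univ, true_and, distTwoGraph_adj] at hu
    obtain ⟨m', hum', hm'v⟩ := exists_adj_adj_of_dist_eq_two hu.1
    have huv : u ≠ v := by rintro rfl; simp at hu
    rw [mem_erase, mem_neighborFinset]
    refine ⟨huv, ?_⟩
    rcases hT.dist_eq_dist_add_one_of_adj r hm'v with hd | hd
    · rcases hT.dist_eq_dist_add_one_of_adj r hum' with hd' | hd'
      · omega
      · exact (huv (hT.eq_of_adj_of_dist_add_one_eq r hum' hm'v.symm (by omega) (by omega))).elim
    · rwa [hT.eq_of_adj_of_dist_add_one_eq r hmv hm'v hm hd.symm, adj_comm]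
  calc _ ≤ #((G.neighborFinset m).erase v) := card_le_card hsub
    _ = G.degree m - 1 := by
      rw [card_erase_of_mem (by simpa using hmv), card_neighborFinset_eq_degree]
    _ < G.maxDegree := by have := G.degree_le_maxDegree m; omega

end IsTree

end Colouring

section Labelling

variable {V : Type}

noncomputable def depthParityLabel (G : SimpleGraph V) (r : V) (c : V → ℕ) (h p k : ℕ) (v : V) :
    ℕ :=
  if Even (G.dist r v) then c v * p else h + (k - 1) * p + c v * p

variable {G : SimpleGraph V} {h p ℓ : ℕ}

namespace IsTree

theorem isLLabelling_depthParityLabel (hT : G.IsTree) (r : V) {k : ℕ}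
    (C : G.distTwoGraph.Coloring (Fin k)) (hph : p ≤ h) :
    IsLLabelling G h p (h + 2 * (k - 1) * p) (G.depthParityLabel r (C ·) h p k) := by
  set f := G.depthParityLabel r (C ·) h p k
  have hCp : ∀ v, (C v : ℕ) * p ≤ (k - 1) * p := fun v =>
    Nat.mul_le_mul_right p (Nat.le_sub_one_of_lt (C v).isLt)
  have hparity : ∀ u v, Even (G.dist u v) ↔ (Even (G.dist r u) ↔ Even (G.dist r v)) := by
    intro u v
    have := hT.even_dist_add_dist_add_dist r u v
    rw [Nat.even_add, Nat.even_add] at this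
    tauto
  have hfar : ∀ u v, ¬ Even (G.dist u v) → f u + h ≤ f v ∨ f v + h ≤ f u := by
    intro u v huv
    have hopp := (hparity u v).not.mp huv
    have := hCp u
    have := hCp v
    simp only [f, depthParityLabel]
    split_ifs with hu hv hv
    · exact absurd (iff_of_true hu hv) hopp
    · omega
    · omega
    · exact absurd (iff_of_false hu hv) hopp
  refine ⟨fun v => ?_, fun u v huv => ?_, fun u v huv => ?_⟩
  · have := hCp v
    have : 2 * (k - 1) * p = (k - 1) * p + (k - 1) * p := by ring
    simp only [f, depthParityLabel]
    split_ifs <;> omega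
  · exact Int.natCast_le_abs_sub_iff.mpr (hfar u v (by rw [huv]; decide))
  · rcases huv with huv | huv
    · have hC : (C u : ℕ) ≠ C v := fun hC => C.valid huv (Fin.ext hC)
      have hstep : ∀ a b : ℕ, a < b → a * p + p ≤ b * p := fun a b hab => by
        simpa [Nat.succ_mul] using Nat.mul_le_mul_right p hab
      have hsame := (hparity u v).mp (by rw [huv]; decide)
      refine Int.natCast_le_abs_sub_iff.mpr ?_
      simp only [f, depthParityLabel]
      rcases Nat.lt_or_gt_of_ne hC with hlt | hlt <;> have := hstep _ _ hlt <;>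
        by_cases hu : Even (G.dist r u)
      all_goals first
        | simp only [if_pos hu, if_pos (hsame.mp hu)]; omega
        | simp only [if_neg hu, if_neg (hsame.not.mp hu)]; omega
    · exact (Nat.cast_le.mpr hph).trans
        (Int.natCast_le_abs_sub_iff.mpr (hfar u v (by rw [huv]; decide)))

theorem isElegantLLabelling_depthParityLabel (hT : G.IsTree) (r : V) {k : ℕ}
    (C : G.distTwoGraph.Coloring (Fin k)) (hh : 0 < h) (hph : p ≤ h) :
    IsElegantLLabelling G h p (h + 2 * (k - 1) * p) (G.depthParityLabel r (C ·) h p k) := by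
  set B := (k - 1) * p
  have hℓ : h + 2 * (k - 1) * p = h + B + B := by ring
  have hCB : ∀ v, (C v : ℕ) * p ≤ B := fun v =>
    Nat.mul_le_mul_right p (Nat.le_sub_one_of_lt (C v).isLt)
  have hpar : ∀ u v, G.Adj u v → (Even (G.dist r u) ↔ ¬ Even (G.dist r v)) := fun u v huv => by
    rcases hT.dist_eq_dist_add_one_of_adj r huv with hd | hd <;> simp [hd, Nat.even_add_one]
  -- a vertex at even depth collects its neighbours' labels in the odd block, and vice versa
  let I : V → Set (ZMod (h + 2 * (k - 1) * p + 1)) := fun u =>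
    if Even (G.dist r u) then circInterval _ (h + B) B else circInterval _ 0 B
  refine ⟨hT.isLLabelling_depthParityLabel r C hph, I, fun u => ?_, fun u w huw => ?_,
    fun u v huv => ?_⟩
  · simp only [I]
    split_ifs <;> exact isCircInterval_circInterval _ _ _
  · have := hCB w
    simp only [I, depthParityLabel]
    by_cases hu : Even (G.dist r u)
    · rw [if_pos hu, if_neg ((hpar u w huw).mp hu)]
      exact natCast_mem_circInterval (by omega) (by omega)
    · rw [if_neg hu, if_pos (not_not.mp (mt (hpar u w huw).mpr hu))]
      exact natCast_mem_circInterval (by omega) (by omega)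
  · simp only [I]
    by_cases hu : Even (G.dist r u)
    · rw [if_pos hu, if_neg ((hpar u v huv).mp hu), Set.inter_comm]
      exact circInterval_inter_circInterval (by omega) (by omega)
    · rw [if_neg hu, if_pos (not_not.mp (mt (hpar u v huv).mpr hu))]
      exact circInterval_inter_circInterval (by omega) (by omega)

theorem add_mul_le_of_isLLabelling [Fintype V] [DecidableRel G.Adj] (hT : G.IsTree)
    {r : V} (hr : G.maxDegree - 1 ≤ #{v ∈ G.neighborFinset r | G.degree v = G.maxDegree})
    (hΔ : 2 ≤ G.maxDegree) (hp : 0 < p) (hph : p ≤ h) {f : V → ℕ}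
    (hf : IsLLabelling G h p ℓ f) : h + (2 * G.maxDegree - 3) * p ≤ ℓ := by
  classical
  set F := {v ∈ G.neighborFinset r | G.degree v = G.maxDegree}
  have hF : ∀ v ∈ F, G.Adj r v ∧ G.degree v = G.maxDegree := fun v hv => by
    simpa [F] using hv
  obtain ⟨s, hsF, hmin⟩ := F.exists_min_image (fun v => |(f v : ℤ) - f r|)
    (card_pos.mp (by omega))
  set C := (G.neighborFinset s).erase r
  have hCcard : #C = G.maxDegree - 1 := by
    rw [card_erase_of_mem (by simpa using (hF s hsF).1.symm), card_neighborFinset_eq_degree,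
      (hF s hsF).2]
  have hdisj : Disjoint F C := Finset.disjoint_left.mpr fun x hxF hxC => by
    obtain ⟨-, hsx⟩ := mem_erase.mp hxC
    -- otherwise `r`, `s`, `x` would form a triangle
    exact hT.dist_ne_of_adj r (mem_neighborFinset _ _ _ |>.mp hsx)
      ((dist_eq_one_iff_adj.mpr (hF s hsF).1).trans (dist_eq_one_iff_adj.mpr (hF x hxF).1).symm)
  have hrW : r ∉ F ∪ C := by
    simp only [mem_union, not_or]
    exact ⟨fun hrF => G.irrefl (hF r hrF).1, fun hrC => (mem_erase.mp hrC).1 rfl⟩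
  have hW : 2 * G.maxDegree - 1 ≤ #(insert r (F ∪ C)) := by
    rw [card_insert_of_notMem hrW, card_union_of_disjoint hdisj, hCcard]
    omega
  have hbound := hf.add_card_sub_two_mul_le hT.connected hp hph (hF s hsF).1
    (W := insert r (F ∪ C)) fun x hx => by
      rcases mem_insert.mp hx with rfl | hx
      · exact Or.inl rfl
      rcases mem_union.mp hx with hx | hx
      · exact Or.inr (Or.inr ⟨(hF x hx).1, hmin x hx⟩)
      · exact Or.inr (Or.inl (by simpa using (mem_erase.mp hx).2))
  calc h + (2 * G.maxDegree - 3) * p ≤ h + (#(insert r (F ∪ C)) - 2) * p :=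
        Nat.add_le_add_left (Nat.mul_le_mul_right p (by omega)) h
    _ ≤ ℓ := hbound

end IsTree

end Labelling

end SimpleGraph

open SimpleGraph

theorem stmt3 {V : Type} [Fintype V] (G : SimpleGraph V) [DecidableRel G.Adj]
    (hT : G.IsTree) (hdiam : ∃ u v : V, 3 ≤ G.dist u v)
    (hsub : ∃ r : V, G.maxDegree - 1 ≤
      ((G.neighborFinset r).filter (fun v => G.degree v = G.maxDegree)).card)
    (h p : ℕ) (hp : 1 ≤ p) (hph : p ≤ h) :
    h + (2 * G.maxDegree - 3) * p ≤ lambdaNum G h p ∧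
    lambdaNum G h p ≤ lambdaStar G h p ∧
    lambdaStar G h p ≤ h + 2 * (G.maxDegree - 1) * p := by
  obtain ⟨u, v, huv⟩ := hdiam
  obtain ⟨r, hr⟩ := hsub
  have hΔ : 2 ≤ G.maxDegree := two_le_maxDegree_of_three_le_dist huv
  obtain ⟨C⟩ := hT.colorable_distTwoGraph (by omega)
  obtain ⟨x⟩ := hT.connected.nonempty
  have hf := hT.isElegantLLabelling_depthParityLabel x C (by omega) hph
  obtain ⟨g, hg⟩ := exists_isLLabelling_lambdaNum hf.1
  exact ⟨hT.add_mul_le_of_isLLabelling hr hΔ hp hph hg, lambdaNum_le_lambdaStar hf,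
    lambdaStar_le hf⟩
end
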